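/- Let (A, m) be an Artinian Gorenstein local ring with Dilworth number d(A). If a is an ideal of A with τ(a) = d(A), then μ(a :_A m) = d(A). -/

import Mathlib

/-!
Because `m · (a :_A m) ⊆ a`, the space `(a :_A m)/a` is a quotient of `(a :_A m)/m(a :_A m)`,
so `τ(a) ≤ μ(a :_A m) ≤ d(A)`; the hypothesis `τ(a) = d(A)` squeezes this chain to equalities.
-/

open scoped Classical in
/-- `dim_{A/m} (a/b)`: the dimension over the residue field `A/m` of the subquotient `a/b`
(realized as the image of the ideal `a` in `A/b`), for ideals `b ⊆ a` with `m·a ⊆ b`; junk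
value `0` if `a/b` is not killed by `m`. -/
noncomputable def resQuotDim {A : Type*} [CommRing A] (m a b : Ideal A) : ℕ :=
  if h : Module.IsTorsionBySet A
      ↥(Submodule.restrictScalars A (a.map (Ideal.Quotient.mk b))) (m : Set A) then
    letI := h.module
    Module.finrank (A ⧸ m) ↥(Submodule.restrictScalars A (a.map (Ideal.Quotient.mk b)))
  else 0

/-- `μ(a) = dim_{A/m} a/ma`, the minimal number of generators of the ideal `a`. -/
noncomputable def muL {A : Type*} [CommRing A] (m a : Ideal A) : ℕ :=
  resQuotDim m a (m * a)

/-- `τ(a) = dim_{A/m} (a :_A m)/a`, the type of the ideal `a`. -/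
noncomputable def tauL {A : Type*} [CommRing A] (m a : Ideal A) : ℕ :=
  resQuotDim m (a.colon m) a

open Module in
theorem Module.IsTorsionBySet.finrank_le_of_surjective {R M N : Type*} [CommRing R]
    {I : Ideal R} (hI : I ≠ ⊤) [AddCommGroup M] [Module R M] [Module.Finite R M]
    [AddCommGroup N] [Module R N] (hM : IsTorsionBySet R M I) (hN : IsTorsionBySet R N I)
    {f : M →ₗ[R] N} (hf : Function.Surjective f) :
    let := hM.module; let := hN.module
    finrank (R ⧸ I) N ≤ finrank (R ⧸ I) M := by
  let := hM.module; let := hN.module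
  have : Nontrivial (R ⧸ I) := Ideal.Quotient.nontrivial_iff.mpr hI
  have : Module.Finite (R ⧸ I) M := .of_restrictScalars_finite R _ _
  exact LinearMap.finrank_le_finrank_of_surjective
    (f := f.extendScalarsOfSurjective Ideal.Quotient.mk_surjective) hf

section

variable {A : Type*} [CommRing A]

theorem Ideal.isTorsionBySet_map_mk {m I J : Ideal A} (h : m * I ≤ J) :
    Module.IsTorsionBySet A (Submodule.restrictScalars A (I.map (Ideal.Quotient.mk J))) m := by
  rintro ⟨x, hx⟩ ⟨r, hr⟩
  obtain ⟨u, hu, rfl⟩ := (Ideal.mem_map_iff_of_surjective _ Ideal.Quotient.mk_surjective).mp hx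
  ext
  simpa [Algebra.smul_def, ← map_mul, Ideal.Quotient.eq_zero_iff_mem] using
    h (Ideal.mul_mem_mul hr hu)

theorem Ideal.mul_colon_le (a m : Ideal A) : m * a.colon m ≤ a :=
  Ideal.mul_le.mpr fun r hr s hs => mul_comm r s ▸ Submodule.mem_colon.mp hs r hr

theorem resQuotDim_antitone_right [IsNoetherianRing A] {m I J₁ J₂ : Ideal A} (hm : m ≠ ⊤)
    (hI : m * I ≤ J₁) (hJ : J₁ ≤ J₂) : resQuotDim m I J₂ ≤ resQuotDim m I J₁ := by
  have h₁ := Ideal.isTorsionBySet_map_mk hI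
  have h₂ := Ideal.isTorsionBySet_map_mk (hI.trans hJ)
  rw [resQuotDim, resQuotDim, dif_pos h₁, dif_pos h₂]
  have hmaps : ∀ x ∈ (I.map (Ideal.Quotient.mk J₁)).restrictScalars A,
      Submodule.factor hJ x ∈ (I.map (Ideal.Quotient.mk J₂)).restrictScalars A := by
    intro x hx
    obtain ⟨u, hu, rfl⟩ := (Ideal.mem_map_iff_of_surjective _ Ideal.Quotient.mk_surjective).mp hx
    exact Ideal.mem_map_of_mem _ hu
  refine h₁.finrank_le_of_surjective hm h₂ (f := (Submodule.factor hJ).restrict hmaps) ?_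
  rintro ⟨y, hy⟩
  obtain ⟨u, hu, rfl⟩ := (Ideal.mem_map_iff_of_surjective _ Ideal.Quotient.mk_surjective).mp hy
  exact ⟨⟨_, Ideal.mem_map_of_mem _ hu⟩, rfl⟩

theorem tauL_le_muL_colon [IsNoetherianRing A] {m : Ideal A} (hm : m ≠ ⊤) (a : Ideal A) :
    tauL m a ≤ muL m (a.colon m) :=
  resQuotDim_antitone_right hm le_rfl (Ideal.mul_colon_le a m)

end

theorem mu_colon_maximalIdeal_of_tau_eq_dilworth_general
    {A : Type*} [CommRing A] [IsArtinianRing A] [IsLocalRing A]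
    (m : Ideal A) (hm : m = IsLocalRing.maximalIdeal A)
    (d : ℕ) (hd : IsGreatest {e : ℕ | ∃ a : Ideal A, muL m a = e} d)
    (a : Ideal A) (ha : tauL m a = d) :
    muL m (a.colon m) = d := by
  have hm_ne_top : m ≠ ⊤ := hm ▸ (IsLocalRing.maximalIdeal.isMaximal A).ne_top
  exact le_antisymm (hd.2 ⟨_, rfl⟩) (ha ▸ tauL_le_muL_colon hm_ne_top a)

/-- **(Ikeda–Watanabe.)**  Let `(A, m)` be an Artinian Gorenstein local ring (i.e.
`dim_{A/m} (0 :_A m) = 1`) with Dilworth number `d(A) = max{μ(a)}`.  If `τ(a) = d(A)` then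
`μ(a :_A m) = d(A)`. -/
theorem mu_colon_maximalIdeal_of_tau_eq_dilworth
    {A : Type*} [CommRing A] [IsArtinianRing A] [IsLocalRing A]
    (m : Ideal A) (hm : m = IsLocalRing.maximalIdeal A)
    (hGor : tauL m (⊥ : Ideal A) = 1)
    (d : ℕ) (hd : IsGreatest {e : ℕ | ∃ a : Ideal A, muL m a = e} d)
    (a : Ideal A) (ha : tauL m a = d) :
    muL m (a.colon m) = d :=
  mu_colon_maximalIdeal_of_tau_eq_dilworth_general m hm d hd a ha
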